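/- Let k be an algebraically closed field of characteristic 3. A homogeneous quartic f ∈ k[x0,x1,x2] is invariant under the substitution g: (x0,x1,x2) ↦ (x0+x1, x1, x2) if and only if f can be written as f1(x1,x2)·(x0^3 − x0·x1^2) + f4(x1,x2), where f1 and f4 are homogeneous of degrees 1 and 4 in x1, x2. -/

import Mathlib

/-!
Treat `f` as a polynomial `p` in `x0` over `k[x1, x2]`; `g` then acts as `p(X) ↦ p(X + x1)`.
Homogeneity bounds the degree of `p` by `4`, and comparing the coefficients of `X ^ 3`, `X` and
`1` in `p(X + y) = p(X)` kills the coefficients of `X ^ 4` and `X ^ 2` and forces the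
coefficient of `X` to be `-y ^ 2` times that of `X ^ 3`. Conversely, in characteristic `3` the
cubic `X ^ 3 - y ^ 2 X = X (X - y) (X + y)` is invariant under `X ↦ X + y`.
-/

open MvPolynomial

namespace Polynomial

variable {R : Type*} [CommRing R] [CharP R 3]

theorem cube_sub_comp_X_add_C (y : R) :
    (X ^ 3 - C (y ^ 2) * X).comp (X + C y) = X ^ 3 - C (y ^ 2) * X := by
  have hcube : (X + C y) ^ 3 = X ^ 3 + C y ^ 3 := add_pow_char _ _ _
  simp only [sub_comp, pow_comp, X_comp, mul_comp, C_comp, hcube, map_pow]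
  ring

theorem eq_C_mul_cube_sub_add_C_of_comp_X_add_C_eq_self [IsDomain R] {y : R} (hy : y ≠ 0)
    {p : R[X]} (hp : p.natDegree ≤ 4) (h : p.comp (X + C y) = p) :
    p = C (p.coeff 3) * (X ^ 3 - C (y ^ 2) * X) + C (p.coeff 0) := by
  set c := p.coeff
  have hsum : p = C (c 0) + C (c 1) * X + C (c 2) * X ^ 2 + C (c 3) * X ^ 3 + C (c 4) * X ^ 4 := by
    rw [p.as_sum_range' 5 (by omega)]
    simp [Finset.sum_range_succ, ← C_mul_X_pow_eq_monomial, c]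
  rw [hsum] at h
  simp only [add_comp, mul_comp, C_comp, pow_comp, X_comp] at h
  have E3 := congrArg (coeff · 3) h
  have E1 := congrArg (coeff · 1) h
  have E0 := congrArg (coeff · 0) h
  simp only [coeff_add, coeff_C_mul, coeff_X_add_C_pow, coeff_X_pow, coeff_C, coeff_X] at E3 E1 E0
  norm_num at E3 E1 E0
  have h3 : (3 : R) = 0 := CharP.cast_eq_zero _ 3
  have h4 : (4 : R) ≠ 0 := by
    rw [show (4 : R) = 3 + 1 by norm_num, h3, zero_add]
    exact one_ne_zero
  have hc4 : c 4 = 0 := by simpa [hy, h4] using E3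
  have hc2 : c 2 = 0 := by
    have : y * c 2 = 0 := by
      linear_combination -E1 + (y * c 2 + y ^ 2 * c 3) * h3 + 4 * y ^ 3 * hc4
    exact (mul_eq_zero.mp this).resolve_left hy
  have hc1 : c 1 = -(y ^ 2 * c 3) := by
    have : y * (c 1 + y ^ 2 * c 3) = 0 := by
      linear_combination E0 - y ^ 2 * hc2 - y ^ 4 * hc4
    exact eq_neg_of_add_eq_zero_left ((mul_eq_zero.mp this).resolve_left hy)
  rw [hsum, hc4, hc2, hc1]
  simp only [map_neg, map_mul, map_pow, map_zero]
  ring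

end Polynomial

namespace MvPolynomial

variable {R : Type*} [CommRing R] {n : ℕ}

theorem finSuccEquiv_rename_succ (a : MvPolynomial (Fin n) R) :
    finSuccEquiv R n (rename Fin.succ a) = Polynomial.C a := by
  induction a using MvPolynomial.induction_on with
  | C r => simp [finSuccEquiv_apply, algebraMap_eq]
  | add p q hp hq => simp only [map_add, hp, hq]
  | mul_X p i hp => simp only [map_mul, hp, rename_X, finSuccEquiv_X_succ]

theorem finSuccEquiv_aeval_cons_X_zero_add (q : MvPolynomial (Fin n) R)
    (f : MvPolynomial (Fin (n + 1)) R) :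
    finSuccEquiv R n (aeval (Fin.cons (X 0 + rename Fin.succ q) fun i => X i.succ) f) =
      (finSuccEquiv R n f).comp (Polynomial.X + Polynomial.C q) := by
  induction f using MvPolynomial.induction_on with
  | C r => simp [finSuccEquiv_apply, algebraMap_eq]
  | add p q hp hq => simp only [map_add, hp, hq, Polynomial.add_comp]
  | mul_X p i hp =>
    simp only [map_mul, hp, Polynomial.mul_comp, aeval_X]
    congr 1
    cases i using Fin.cases with
    | zero => simp [finSuccEquiv_X_zero, finSuccEquiv_rename_succ]
    | succ j => simp [finSuccEquiv_X_succ]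

theorem IsHomogeneous.natDegree_finSuccEquiv_le {φ : MvPolynomial (Fin (n + 1)) R} {d : ℕ}
    (hφ : φ.IsHomogeneous d) : (finSuccEquiv R n φ).natDegree ≤ d := by
  rw [natDegree_finSuccEquiv]
  exact (degreeOf_le_totalDegree φ 0).trans hφ.totalDegree_le

end MvPolynomial

theorem stmt_3_general (k : Type*) [Field k] [CharP k 3]
    (f : MvPolynomial (Fin 3) k) (hf : f.IsHomogeneous 4) :
    aeval ![X 0 + X 1, X 1, X 2] f = f ↔
      ∃ f1 f4 : MvPolynomial (Fin 2) k, f1.IsHomogeneous 1 ∧ f4.IsHomogeneous 4 ∧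
        f = aeval ![X 1, X 2] f1 * (X 0 ^ 3 - X 0 * X 1 ^ 2) + aeval ![X 1, X 2] f4 := by
  have hg : (![X 0 + X 1, X 1, X 2] : Fin 3 → MvPolynomial (Fin 3) k) =
      Fin.cons (X 0 + rename Fin.succ (X 0)) fun i => X i.succ := by
    rw [rename_X]; ext i : 1; fin_cases i <;> rfl
  have hA : (aeval ![X 1, X 2] : MvPolynomial (Fin 2) k →ₐ[k] MvPolynomial (Fin 3) k) =
      rename Fin.succ := by
    ext i : 1; fin_cases i <;> simp
  have hform (a b : MvPolynomial (Fin 2) k) :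
      finSuccEquiv k 2 (rename Fin.succ a * (X 0 ^ 3 - X 0 * X 1 ^ 2) + rename Fin.succ b) =
        Polynomial.C a * (Polynomial.X ^ 3 - Polynomial.C (X 0 ^ 2) * Polynomial.X) +
          Polynomial.C b := by
    rw [show (X 1 : MvPolynomial (Fin 3) k) = X (Fin.succ 0) from rfl]
    simp only [map_add, map_mul, map_sub, map_pow, finSuccEquiv_rename_succ, finSuccEquiv_X_zero,
      finSuccEquiv_X_succ]
    ring
  rw [hg, hA, ← (finSuccEquiv k 2).injective.eq_iff, finSuccEquiv_aeval_cons_X_zero_add]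
  constructor
  · intro h
    refine ⟨_, _, hf.finSuccEquiv_coeff_isHomogeneous 3 1 rfl,
      hf.finSuccEquiv_coeff_isHomogeneous 0 4 rfl, (finSuccEquiv k 2).injective ?_⟩
    rw [hform]
    exact Polynomial.eq_C_mul_cube_sub_add_C_of_comp_X_add_C_eq_self (X_ne_zero 0)
      hf.natDegree_finSuccEquiv_le h
  · rintro ⟨a, b, -, -, rfl⟩
    simp only [hform, Polynomial.add_comp, Polynomial.mul_comp, Polynomial.C_comp,
      Polynomial.cube_sub_comp_X_add_C]

/-- In characteristic 3, a homogeneous quartic is invariant under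
`(x0,x1,x2) ↦ (x0+x1,x1,x2)` iff it has the form `f1(x1,x2)(x0^3 - x0 x1^2) + f4(x1,x2)`. -/
theorem stmt_3 (k : Type*) [Field k] [IsAlgClosed k] [CharP k 3]
    (f : MvPolynomial (Fin 3) k) (hf : f.IsHomogeneous 4) :
    aeval ![X 0 + X 1, X 1, X 2] f = f ↔
      ∃ f1 f4 : MvPolynomial (Fin 2) k, f1.IsHomogeneous 1 ∧ f4.IsHomogeneous 4 ∧
        f = aeval ![X 1, X 2] f1 * (X 0 ^ 3 - X 0 * X 1 ^ 2) + aeval ![X 1, X 2] f4 :=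
  stmt_3_general k f hf
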